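/- arXiv:2209.06003 — 2 statements merged into one kernel-verified Lean document; each statement's English description precedes it below -/
import Mathlib

section
/- Let 0 < p⃗, θ ≤ ∞ and let w be a non-negative measurable function on (0,∞). If ‖w‖_{L^θ(t,∞)} = ∞ for every t > 0, then the local mixed Morrey-type space LM_{p⃗θ,w}(ℝ^n) contains only functions equivalent to 0 on ℝ^n (i.e. ‖f‖_{LM_{p⃗θ,w}} < ∞ forces f = 0 almost everywhere). -/
open MeasureTheory ENNReal NNReal Set Filter

noncomputable section

namespace LMM

/-- `L^p` "norm" (with the usual `essSup` convention for `p = ∞`)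
of an `ℝ≥0∞`-valued function on `ℝ` with respect to a measure `μ`. -/
def lpNormE (p : ℝ≥0∞) (g : ℝ → ℝ≥0∞) (μ : Measure ℝ) : ℝ≥0∞ :=
  if p = ∞ then essSup g μ else (∫⁻ t, g t ^ p.toReal ∂μ) ^ (1 / p.toReal)

/-- Iterated mixed Lebesgue norm of an `ℝ≥0∞`-valued function on `ℝ^n`:
the innermost integration is in the variable `x 1` with exponent `p 1`,
the outermost in `x n` with exponent `p n`. -/
def mixedNorm : (n : ℕ) → (Fin n → ℝ≥0∞) → ((Fin n → ℝ) → ℝ≥0∞) → ℝ≥0∞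
  | 0, _, g => g finZeroElim
  | (n + 1), p, g =>
      lpNormE (p (Fin.last n))
        (fun t => mixedNorm n (fun i => p i.castSucc) (fun x => g (Fin.snoc x t)))
        volume

/-- Mixed Lebesgue norm of `g` restricted to a set `S`. -/
def mixedNormOn (n : ℕ) (p : Fin n → ℝ≥0∞) (g : (Fin n → ℝ) → ℝ≥0∞)
    (S : Set (Fin n → ℝ)) : ℝ≥0∞ :=
  mixedNorm n p (S.indicator g)

/-- The (closed) cube centered at `c` with side length `2 * r`. -/
def cubeAt {n : ℕ} (c : Fin n → ℝ) (r : ℝ) : Set (Fin n → ℝ) := {x | ∀ i, |x i - c i| ≤ r}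

/-- The cube `Q(0, r)` centered at the origin with side length `2 * r`. -/
def cube0 (n : ℕ) (r : ℝ) : Set (Fin n → ℝ) := cubeAt 0 r

/-- Euclidean norm on `Fin n → ℝ`. -/
def euclNorm {n : ℕ} (x : Fin n → ℝ) : ℝ := Real.sqrt (∑ i, x i ^ 2)

/-- The closed Euclidean ball of radius `r` centered at the origin. -/
def closedBall0 (n : ℕ) (r : ℝ) : Set (Fin n → ℝ) := {x | euclNorm x ≤ r}

/-- The local mixed Morrey-type quasi-norm `‖·‖_{LM_{p θ, w}}` of an
`ℝ≥0∞`-valued function. -/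
def LMnormE (n : ℕ) (p : Fin n → ℝ≥0∞) (θ : ℝ≥0∞) (w : ℝ → ℝ)
    (g : (Fin n → ℝ) → ℝ≥0∞) : ℝ≥0∞ :=
  lpNormE θ (fun r => ENNReal.ofReal (w r) * mixedNormOn n p g (cube0 n r))
    (volume.restrict (Ioi (0 : ℝ)))

/-- The local mixed Morrey-type quasi-norm of a real-valued function. -/
def LMnorm (n : ℕ) (p : Fin n → ℝ≥0∞) (θ : ℝ≥0∞) (w : ℝ → ℝ)
    (f : (Fin n → ℝ) → ℝ) : ℝ≥0∞ :=
  LMnormE n p θ w (fun x => (‖f x‖₊ : ℝ≥0∞))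

/-- `1/p₁ + ⋯ + 1/pₙ`. -/
def sumInv {n : ℕ} (p : Fin n → ℝ≥0∞) : ℝ := ∑ i, ((p i)⁻¹).toReal

/-- Hardy–Littlewood maximal operator (over cubes) of an `ℝ≥0∞`-valued function. -/
def maximalE {n : ℕ} (g : (Fin n → ℝ) → ℝ≥0∞) (x : Fin n → ℝ) : ℝ≥0∞ :=
  ⨆ (c : Fin n → ℝ) (r : ℝ) (_ : 0 < r) (_ : x ∈ cubeAt c r),
    (volume (cubeAt c r))⁻¹ * ∫⁻ y in cubeAt c r, g y

/-- Hardy–Littlewood maximal operator of a real-valued function. -/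
def maximal {n : ℕ} (f : (Fin n → ℝ) → ℝ) : (Fin n → ℝ) → ℝ≥0∞ :=
  maximalE (fun y => (‖f y‖₊ : ℝ≥0∞))

/-- Weighted `L^θ` norm `‖v · g‖_{L^θ(0,∞)}` of an `ℝ≥0∞`-valued function. -/
def wLpE (θ : ℝ≥0∞) (v : ℝ → ℝ) (g : ℝ → ℝ≥0∞) : ℝ≥0∞ :=
  lpNormE θ (fun r => ENNReal.ofReal (v r) * g r) (volume.restrict (Ioi (0 : ℝ)))

/-- The dual Hardy operator `H* g (r) = ∫_r^∞ g`. -/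
def dualHardyE (g : ℝ → ℝ≥0∞) (r : ℝ) : ℝ≥0∞ := ∫⁻ t in Ioi r, g t

/-- The Hardy operator `H g (r) = ∫_0^r g`. -/
def hardyE (g : ℝ → ℝ≥0∞) (r : ℝ) : ℝ≥0∞ := ∫⁻ t in Ioo 0 r, g t

/-- The weight `v̂₁(r) = r^{-(1/p₁+⋯+1/pₙ)-1} w(r)`. -/
def vhat1 {n : ℕ} (p : Fin n → ℝ≥0∞) (w : ℝ → ℝ) (r : ℝ) : ℝ :=
  r ^ (-(sumInv p) - 1) * w r

/-- The weight `v̂₂(r) = r^{-(1/p₁+⋯+1/pₙ)} w(r)`. -/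
def vhat2 {n : ℕ} (p : Fin n → ℝ≥0∞) (w : ℝ → ℝ) (r : ℝ) : ℝ :=
  r ^ (-(sumInv p)) * w r

/-- Boundedness of the dual Hardy operator `H*` from `L_{θ,v₁}(0,∞)` to `L_{θ,v₂}(0,∞)`. -/
def DualHardyBounded (θ : ℝ≥0∞) (v1 v2 : ℝ → ℝ) : Prop :=
  ∃ C : ℝ≥0, ∀ g : ℝ → ℝ≥0∞, Measurable g → wLpE θ v2 (dualHardyE g) ≤ C * wLpE θ v1 g

/-- Boundedness of the Hardy operator `H` from `L_{θ,v₁}(0,∞)` to `L_{θ,v₂}(0,∞)`. -/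
def HardyBounded (θ : ℝ≥0∞) (v1 v2 : ℝ → ℝ) : Prop :=
  ∃ C : ℝ≥0, ∀ g : ℝ → ℝ≥0∞, Measurable g → wLpE θ v2 (hardyE g) ≤ C * wLpE θ v1 g

/-- The class `Ω_θ`. -/
def OmegaTheta (θ : ℝ≥0∞) (w : ℝ → ℝ) : Prop :=
  Measurable w ∧ (∀ r, 0 ≤ w r) ∧
    ¬ (∀ᵐ r ∂(volume.restrict (Ioi (0 : ℝ))), w r = 0) ∧
    ∃ t > (0 : ℝ), lpNormE θ (fun r => ENNReal.ofReal (w r)) (volume.restrict (Ioi t)) < ∞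

/-- The class `Ω_{p,θ}`. -/
def OmegaPTheta {n : ℕ} (p : Fin n → ℝ≥0∞) (θ : ℝ≥0∞) (w : ℝ → ℝ) : Prop :=
  Measurable w ∧ (∀ r, 0 ≤ w r) ∧
    ¬ (∀ᵐ r ∂(volume.restrict (Ioi (0 : ℝ))), w r = 0) ∧
    (∃ t > (0 : ℝ), lpNormE θ (fun r => ENNReal.ofReal (w r)) (volume.restrict (Ioi t)) < ∞) ∧
    (∃ t > (0 : ℝ), lpNormE θ (fun r => ENNReal.ofReal (w r * r ^ sumInv p))
        (volume.restrict (Ioo (0 : ℝ) t)) < ∞)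

/-- The doubling condition `C⁻¹ w(r) ≤ w(2r) ≤ C w(r)` for all `r > 0`. -/
def Doubling (w : ℝ → ℝ) : Prop :=
  ∃ C : ℝ, 0 < C ∧ ∀ r > (0 : ℝ), C⁻¹ * w r ≤ w (2 * r) ∧ w (2 * r) ≤ C * w r

/-- Conjugate exponent in `ℝ≥0∞`. -/
def conjE (p : ℝ≥0∞) : ℝ≥0∞ := (1 - p⁻¹)⁻¹

/-- `A` is a `(p', w, R)`-block: supported in `Q(0,R)` with `‖A‖_{L^{p'}} ≤ w(R)`. -/
def IsBlock {n : ℕ} (p' : Fin n → ℝ≥0∞) (w : ℝ → ℝ) (R : ℝ)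
    (A : (Fin n → ℝ) → ℝ) : Prop :=
  Measurable A ∧ (∀ x ∉ cube0 n R, A x = 0) ∧
    mixedNorm n p' (fun x => (‖A x‖₊ : ℝ≥0∞)) ≤ ENNReal.ofReal (w R)

/-- `ℓ^q` norm of a `ℤ`-indexed real sequence. -/
def ellNorm (q : ℝ≥0∞) (a : ℤ → ℝ) : ℝ≥0∞ :=
  if q = ∞ then ⨆ j, (‖a j‖₊ : ℝ≥0∞)
  else (∑' j, (‖a j‖₊ : ℝ≥0∞) ^ q.toReal) ^ (1 / q.toReal)

/-- Membership in the local block space `LH_{p' θ', w}`. -/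
def MemLH {n : ℕ} (p' : Fin n → ℝ≥0∞) (θ' : ℝ≥0∞) (w : ℝ → ℝ)
    (g : (Fin n → ℝ) → ℝ) : Prop :=
  ∃ (lam : ℤ → ℝ) (A : ℤ → (Fin n → ℝ) → ℝ),
    (∀ j, IsBlock p' w ((2 : ℝ) ^ j) (A j)) ∧
    (∀ᵐ x, HasSum (fun j => lam j * A j x) (g x)) ∧ ellNorm θ' lam < ∞

/-- The local block space norm `‖g‖_{LH_{p' θ', w}}`. -/
def LHnorm {n : ℕ} (p' : Fin n → ℝ≥0∞) (θ' : ℝ≥0∞) (w : ℝ → ℝ)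
    (g : (Fin n → ℝ) → ℝ) : ℝ≥0∞ :=
  ⨅ (lam : ℤ → ℝ) (A : ℤ → (Fin n → ℝ) → ℝ)
    (_ : (∀ j, IsBlock p' w ((2 : ℝ) ^ j) (A j)) ∧
         ∀ᵐ x, HasSum (fun j => lam j * A j x) (g x)),
    ellNorm θ' lam

/-- `(∫_0^∞ (r^{-λ} A(r))^q dr/r)^{1/q}` (essential supremum when `q = ∞`). -/
def morreyScale (q : ℝ≥0∞) (lam : ℝ) (A : ℝ → ℝ≥0∞) : ℝ≥0∞ :=
  if q = ∞ then essSup (fun r => ENNReal.ofReal (r ^ (-lam)) * A r) (volume.restrict (Ioi (0 : ℝ)))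
  else (∫⁻ r in Ioi (0 : ℝ),
      (ENNReal.ofReal (r ^ (-lam)) * A r) ^ q.toReal * ENNReal.ofReal r⁻¹) ^ (1 / q.toReal)

/-- The local mixed Morrey norm `‖·‖_{LM^λ_{p,q}}` (cubes `Q(0,r)`). -/
def LMlamQ (n : ℕ) (p : Fin n → ℝ≥0∞) (q : ℝ≥0∞) (lam : ℝ)
    (g : (Fin n → ℝ) → ℝ≥0∞) : ℝ≥0∞ :=
  morreyScale q lam (fun r => mixedNormOn n p g (cube0 n r))

/-- The local mixed Morrey norm `‖·‖_{LM^λ_{p,q}}` (balls `B(0,r)`). -/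
def LMlamB (n : ℕ) (p : Fin n → ℝ≥0∞) (q : ℝ≥0∞) (lam : ℝ)
    (g : (Fin n → ℝ) → ℝ≥0∞) : ℝ≥0∞ :=
  morreyScale q lam (fun r => mixedNormOn n p g (closedBall0 n r))

/-- Condition (★) on the auxiliary exponent vector `s`. -/
def StarCond {n : ℕ} (p s : Fin n → ℝ≥0∞) (w : ℝ → ℝ) : Prop :=
  ∃ C : ℝ, ∀ r : ℝ, 0 < r →
    (∫⁻ t in Ioi r,
        ENNReal.ofReal (t ^ (sumInv s / (n : ℝ) - sumInv p / (n : ℝ) - 1) / w (r * t)))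
      ≤ ENNReal.ofReal (C * (r ^ (sumInv p / (n : ℝ) - sumInv s / (n : ℝ)) / w r))

/-- `ℓ^u`-norm (`sup` for `u = ∞`) of an `ℕ`-indexed family in `ℝ≥0∞`. -/
def vecNorm (u : ℝ≥0∞) (a : ℕ → ℝ≥0∞) : ℝ≥0∞ :=
  if u = ∞ then ⨆ j, a j else (∑' j, a j ^ u.toReal) ^ (1 / u.toReal)

/-- Operator norm of the functional `g ↦ ∫ f g` on the local block space. -/
def dualNormOf (n : ℕ) (p : Fin n → ℝ≥0∞) (θ : ℝ≥0∞) (w : ℝ → ℝ)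
    (f : (Fin n → ℝ) → ℝ) : ℝ≥0∞ :=
  ⨆ (g : (Fin n → ℝ) → ℝ) (_ : MemLH (fun i => conjE (p i)) (conjE θ) w g)
    (_ : LHnorm (fun i => conjE (p i)) (conjE θ) w g ≤ 1),
    ENNReal.ofReal |∫ x, f x * g x|

/-- `sup_{t>0} |e^{tΔ}f(x)|` for a (locally integrable) function `f`. -/
def heatSup (n : ℕ) (f : (Fin n → ℝ) → ℝ) (x : Fin n → ℝ) : ℝ≥0∞ :=
  ⨆ (t : ℝ) (_ : 0 < t),
    ENNReal.ofReal
      |∫ y, (4 * Real.pi * t) ^ (-(n : ℝ) / 2) *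
          Real.exp (-(∑ i, (x i - y i) ^ 2) / (4 * t)) * f y|

/-- The Schwartz seminorm `ρ_N`. -/
def rhoN {n : ℕ} (N : ℕ) (φ : SchwartzMap (Fin n → ℝ) ℝ) : ℝ≥0∞ :=
  ∑ k ∈ Finset.range (N + 1),
    ⨆ x : Fin n → ℝ, ENNReal.ofReal ((1 + euclNorm x) ^ N * ‖iteratedFDeriv ℝ k (⇑φ) x‖)

/-- The grand maximal operator of a (locally integrable) function. -/
def grandMaxF {n : ℕ} (N : ℕ) (f : (Fin n → ℝ) → ℝ) (x : Fin n → ℝ) : ℝ≥0∞ :=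
  ⨆ (φ : SchwartzMap (Fin n → ℝ) ℝ) (_ : rhoN N φ ≤ 1) (t : ℝ) (_ : 0 < t),
    ENNReal.ofReal |∫ y, t ^ (-(n : ℝ)) * φ (fun i => (x i - y i) / t) * f y|

/-- The `n`-dimensional Hardy operator `Hf(x) = |x|^{-n} ∫_{|y|<|x|} f(y) dy`. -/
def hardyOp {n : ℕ} (f : (Fin n → ℝ) → ℝ) (x : Fin n → ℝ) : ℝ :=
  (euclNorm x) ^ (-(n : ℝ)) * ∫ y in {y : Fin n → ℝ | euclNorm y < euclNorm x}, f y

end LMM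

/-!
If `f` is not a.e. zero, some truncation `min (|f|, 1) · χ_{Q(0,t)}` has positive integral, and
its mixed norm bounds that of `f · χ_{Q(0,r)}` from below by some `c > 0` for every `r ≥ t`;
hence `‖f‖_{LM} ≥ c ‖w‖_{L^θ(t,∞)} = ∞`. Positivity of the mixed norm is proved by induction on
the dimension, using Fubini and a Markov estimate on the slices.
-/

namespace LMM

section Cubes

variable {n : ℕ}

lemma cube0_eq_pi (n : ℕ) (t : ℝ) : cube0 n t = univ.pi fun _ : Fin n => Icc (-t) t := by
  ext x
  simp only [cube0, cubeAt, mem_ofPred_eq, Pi.zero_apply, sub_zero, mem_univ_pi, mem_Icc, abs_le]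

lemma measurableSet_cube0 (n : ℕ) (t : ℝ) : MeasurableSet (cube0 n t) := by
  rw [cube0_eq_pi]
  exact .univ_pi fun _ => measurableSet_Icc

lemma volume_cube0_ne_top (n : ℕ) (t : ℝ) : volume (cube0 n t) ≠ ∞ := by
  rw [cube0_eq_pi, volume_pi_pi]
  exact ENNReal.prod_ne_top fun _ _ => by simp [Real.volume_Icc]

lemma cube0_mono {t r : ℝ} (h : t ≤ r) : cube0 n t ⊆ cube0 n r :=
  fun _ hx i => (hx i).trans h

lemma exists_nat_mem_cube0 (x : Fin n → ℝ) : ∃ k : ℕ, x ∈ cube0 n (k + 1) := by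
  obtain ⟨k, hk⟩ := exists_nat_ge ‖x‖
  refine ⟨k, fun i => ?_⟩
  simpa only [Pi.zero_apply, sub_zero, Real.norm_eq_abs] using
    (norm_le_pi_norm x i).trans (hk.trans (le_add_of_nonneg_right zero_le_one))

lemma snoc_mem_cube0_iff {x : Fin n → ℝ} {s t : ℝ} :
    (Fin.snoc x s : Fin (n + 1) → ℝ) ∈ cube0 (n + 1) t ↔ x ∈ cube0 n t ∧ s ∈ Icc (-t) t := by
  simp only [cube0, cubeAt, mem_ofPred_eq, Pi.zero_apply, sub_zero, Fin.forall_fin_succ',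
    Fin.snoc_castSucc, Fin.snoc_last, mem_Icc, abs_le]

lemma lintegral_le_volume_cube0 {t : ℝ} {g : (Fin n → ℝ) → ℝ≥0∞} (hg1 : ∀ x, g x ≤ 1)
    (hg0 : ∀ x ∉ cube0 n t, g x = 0) : ∫⁻ x, g x ≤ volume (cube0 n t) :=
  calc ∫⁻ x, g x ≤ ∫⁻ x, (cube0 n t).indicator 1 x := lintegral_mono fun x => by
        by_cases hx : x ∈ cube0 n t
        · simpa [hx] using hg1 x
        · simp [hx, hg0 x hx]
    _ = volume (cube0 n t) := lintegral_indicator_one (measurableSet_cube0 n t)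

end Cubes

section Snoc

variable {n : ℕ}

def snocEquiv (n : ℕ) : ℝ × (Fin n → ℝ) ≃ᵐ (Fin (n + 1) → ℝ) :=
  (MeasurableEquiv.piFinSuccAbove (fun _ => ℝ) (Fin.last n)).symm

lemma snocEquiv_apply (z : ℝ × (Fin n → ℝ)) : snocEquiv n z = Fin.snoc z.2 z.1 := by
  simp [snocEquiv, MeasurableEquiv.piFinSuccAbove_symm_apply, Fin.insertNthEquiv,
    Fin.insertNth_last']

lemma measurePreserving_snocEquiv :
    MeasurePreserving (snocEquiv n) ((volume : Measure ℝ).prod volume) volume :=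
  (volume_preserving_piFinSuccAbove (fun _ : Fin (n + 1) => ℝ) (Fin.last n)).symm

lemma measurable_snoc_left (s : ℝ) :
    Measurable fun x : Fin n → ℝ => (Fin.snoc x s : Fin (n + 1) → ℝ) := by
  simpa only [Function.comp_def, snocEquiv_apply] using
    (snocEquiv n).measurable.comp (measurable_prodMk_left (m := inferInstance) (x := s))

lemma ae_ae_snoc_of_ae {P : (Fin (n + 1) → ℝ) → Prop} (h : ∀ᵐ y, P y) :
    ∀ᵐ s : ℝ, ∀ᵐ x : Fin n → ℝ, P (Fin.snoc x s) := by
  have h' := Measure.ae_ae_of_ae_prod (measurePreserving_snocEquiv.quasiMeasurePreserving.ae h)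
  simpa only [snocEquiv_apply] using h'

lemma lintegral_eq_lintegral_lintegral_snoc {g : (Fin (n + 1) → ℝ) → ℝ≥0∞} (hg : Measurable g) :
    ∫⁻ y, g y = ∫⁻ s, ∫⁻ x, g (Fin.snoc x s) := by
  rw [← measurePreserving_snocEquiv.lintegral_comp hg,
    lintegral_prod (fun z => g (snocEquiv n z)) (hg.comp (snocEquiv n).measurable).aemeasurable]
  simp only [snocEquiv_apply]

lemma measurable_lintegral_snoc {g : (Fin (n + 1) → ℝ) → ℝ≥0∞} (hg : Measurable g) :
    Measurable fun s => ∫⁻ x, g (Fin.snoc x s) := by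
  have hg' : Measurable fun z : ℝ × (Fin n → ℝ) => g (Fin.snoc z.2 z.1) := by
    simpa only [Function.comp_def, snocEquiv_apply] using hg.comp (snocEquiv n).measurable
  exact hg'.lintegral_prod_right'

end Snoc

section LpNorm

variable {q : ℝ≥0∞} {μ : Measure ℝ}

lemma lpNormE_mono_ae {h₁ h₂ : ℝ → ℝ≥0∞} (h : h₁ ≤ᵐ[μ] h₂) :
    lpNormE q h₁ μ ≤ lpNormE q h₂ μ := by
  unfold lpNormE
  split_ifs
  · exact essSup_mono_ae h
  · gcongr ?_ ^ _
    exact lintegral_mono_ae (h.mono fun x hx => by gcongr)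

lemma lpNormE_mono_measure {ν : Measure ℝ} (hμν : μ ≤ ν) (h : ℝ → ℝ≥0∞) :
    lpNormE q h μ ≤ lpNormE q h ν := by
  unfold lpNormE
  split_ifs
  · exact essSup_mono_measure (Measure.absolutelyContinuous_of_le hμν)
  · gcongr ?_ ^ _
    exact lintegral_mono' hμν le_rfl

lemma mul_lpNormE_le (hq : 0 < q) (c : ℝ≥0∞) (h : ℝ → ℝ≥0∞) :
    c * lpNormE q h μ ≤ lpNormE q (fun r => c * h r) μ := by
  unfold lpNormE
  split_ifs with hqt
  · exact ENNReal.essSup_const_mul.ge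
  · have hq' : 0 < q.toReal := ENNReal.toReal_pos hq.ne' hqt
    calc c * (∫⁻ r, h r ^ q.toReal ∂μ) ^ (1 / q.toReal)
        = (c ^ q.toReal * ∫⁻ r, h r ^ q.toReal ∂μ) ^ (1 / q.toReal) := by
          rw [ENNReal.mul_rpow_of_nonneg _ _ (by positivity), ← ENNReal.rpow_mul,
            mul_one_div_cancel hq'.ne', ENNReal.rpow_one]
      _ ≤ (∫⁻ r, (c * h r) ^ q.toReal ∂μ) ^ (1 / q.toReal) := by
          gcongr ?_ ^ _
          simp_rw [ENNReal.mul_rpow_of_nonneg _ _ hq'.le]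
          exact lintegral_const_mul_le _ _

lemma exists_pos_le_lpNormE (hq : 0 < q) {s m : ℝ≥0∞} (hs : 0 < s) (hm : 0 < m) :
    ∃ c > 0, ∀ (h : ℝ → ℝ≥0∞) (T : Set ℝ), MeasurableSet T → m ≤ μ T →
      (∀ x ∈ T, s ≤ h x) → c ≤ lpNormE q h μ := by
  by_cases hqt : q = ∞
  · refine ⟨s, hs, fun h T _ hmT hsh => ?_⟩
    rw [lpNormE, if_pos hqt]
    by_contra! hlt
    have hT : T ⊆ {x | ¬ h x < s} := fun x hx => not_lt.mpr (hsh x hx)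
    exact hm.ne' (le_zero_iff.mp (hmT.trans_eq (measure_mono_null hT (ae_lt_of_essSup_lt hlt))))
  · have hq' : 0 < q.toReal := ENNReal.toReal_pos hq.ne' hqt
    refine ⟨(s ^ q.toReal * m) ^ (1 / q.toReal), ?_, fun h T hT hmT hsh => ?_⟩
    · exact ENNReal.rpow_pos_of_nonneg
        (ENNReal.mul_pos (ENNReal.rpow_pos_of_nonneg hs hq'.le).ne' hm.ne') (by positivity)
    rw [lpNormE, if_neg hqt]
    gcongr ?_ ^ _
    calc s ^ q.toReal * m ≤ ∫⁻ x, T.indicator (fun _ => s ^ q.toReal) x ∂μ := by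
          rw [lintegral_indicator_const hT]
          gcongr
      _ ≤ ∫⁻ x, h x ^ q.toReal ∂μ := lintegral_mono fun x => by
          by_cases hx : x ∈ T
          · simpa [hx] using ENNReal.rpow_le_rpow (hsh x hx) hq'.le
          · simp [hx]

end LpNorm

lemma half_le_mul_measure_inter_setOf_le {α : Type*} [MeasurableSpace α] {μ : Measure α}
    {A : α → ℝ≥0∞} {I : Set α} {a V : ℝ≥0∞} (hA : Measurable A) (hI : MeasurableSet I)
    (hI0 : μ I ≠ 0) (hItop : μ I ≠ ∞) (hAV : ∀ x, A x ≤ V) (hA0 : ∀ x ∉ I, A x = 0)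
    (ha : a ≤ ∫⁻ x, A x ∂μ) (hatop : a ≠ ∞) :
    a / 2 ≤ V * μ (I ∩ {x | a / 2 / μ I ≤ A x}) := by
  set s := a / 2 / μ I
  set T := I ∩ {x | s ≤ A x}
  have hT : MeasurableSet T := hI.inter (hA measurableSet_Ici)
  have hsplit : ∀ x, A x ≤ I.indicator (fun _ => s) x + T.indicator (fun _ => V) x := by
    intro x
    by_cases hxI : x ∈ I
    · by_cases hsx : s ≤ A x
      · simpa [T, hxI, hsx] using (hAV x).trans le_add_self
      · simpa [T, hxI, hsx] using (not_le.mp hsx).le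
    · simp [hA0 x hxI]
  have hsI : s * μ I = a / 2 :=
    ENNReal.div_mul_cancel hI0 hItop
  have hle : a ≤ a / 2 + V * μ T :=
    calc a ≤ ∫⁻ x, A x ∂μ := ha
      _ ≤ ∫⁻ x, (I.indicator (fun _ => s) x + T.indicator (fun _ => V) x) ∂μ :=
          lintegral_mono hsplit
      _ = a / 2 + V * μ T := by
          rw [lintegral_add_left (measurable_const.indicator hI), lintegral_indicator_const hI,
            lintegral_indicator_const hT, hsI]
  rw [← ENNReal.sub_half hatop]
  exact tsub_le_iff_left.mpr hle


section MixedNorm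

lemma volume_fin_zero : (volume : Measure (Fin 0 → ℝ)) = Measure.dirac finZeroElim := by
  rw [volume_pi, Measure.pi_of_empty _ finZeroElim]

lemma mixedNorm_mono_ae : ∀ (n : ℕ) (p : Fin n → ℝ≥0∞) {g₁ g₂ : (Fin n → ℝ) → ℝ≥0∞},
    g₁ ≤ᵐ[volume] g₂ → mixedNorm n p g₁ ≤ mixedNorm n p g₂
  | 0, _, _, _, h => by
      rw [volume_fin_zero, ae_dirac_eq] at h
      exact h
  | n + 1, _, _, _, h => by
      refine lpNormE_mono_ae ?_
      filter_upwards [ae_ae_snoc_of_ae h] with s hs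
      exact mixedNorm_mono_ae n _ hs

/- The bound is uniform in `g` because `s ↦ mixedNorm n p (g (Fin.snoc · s))` need not be
measurable: mere positivity of the slice norms on a set of positive measure would not make their
`L^q` norm positive. -/
lemma exists_pos_le_mixedNorm {t : ℝ} (ht : 0 < t) : ∀ (n : ℕ) (p : Fin n → ℝ≥0∞),
    (∀ i, 0 < p i) → ∀ a > 0, ∃ b > 0, ∀ g : (Fin n → ℝ) → ℝ≥0∞, Measurable g →
      (∀ x, g x ≤ 1) → (∀ x ∉ cube0 n t, g x = 0) → a ≤ ∫⁻ x, g x → b ≤ mixedNorm n p g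
  | 0, _, _, a, ha => ⟨a, ha, fun g _ _ _ hag => by
      rwa [volume_fin_zero, lintegral_dirac] at hag⟩
  | n + 1, p, hp, a, ha => by
    set L := volume (Icc (-t) t)
    set V := volume (cube0 n t)
    have hL0 : L ≠ 0 := by simp [L, Real.volume_Icc]; linarith
    have hLtop : L ≠ ∞ := by simp [L, Real.volume_Icc]
    obtain ⟨b, hb, hslice⟩ := exists_pos_le_mixedNorm ht n (fun i => p i.castSucc)
      (fun i => hp _) (a / 2 / L) (ENNReal.div_pos (ENNReal.div_pos ha.ne' (by simp)).ne' hLtop)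
    obtain ⟨c, hc, hlp⟩ := exists_pos_le_lpNormE (μ := volume) (hp (Fin.last n)) hb
      (m := a / 2 / V) (ENNReal.div_pos (ENNReal.div_pos ha.ne' (by simp)).ne'
        (volume_cube0_ne_top n t))
    refine ⟨c, hc, fun g hg hg1 hg0 hag => ?_⟩
    have hslice0 : ∀ s, ∀ x ∉ cube0 n t, g (Fin.snoc x s) = 0 := fun s x hx =>
      hg0 _ fun h => hx (snoc_mem_cube0_iff.mp h).1
    have hA0 : ∀ s ∉ Icc (-t) t, ∫⁻ x, g (Fin.snoc x s) = 0 := fun s hs => by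
      simp [hg0 _ fun h => hs (snoc_mem_cube0_iff.mp h).2]
    have hatop : a ≠ ∞ := ne_top_of_le_ne_top (volume_cube0_ne_top (n + 1) t)
      (hag.trans (lintegral_le_volume_cube0 hg1 hg0))
    have hmarkov := half_le_mul_measure_inter_setOf_le (measurable_lintegral_snoc hg)
      measurableSet_Icc hL0 hLtop (fun s => lintegral_le_volume_cube0 (fun x => hg1 _) (hslice0 s))
      hA0 (hag.trans_eq (lintegral_eq_lintegral_lintegral_snoc hg)) hatop
    exact hlp _ _ (measurableSet_Icc.inter (measurable_lintegral_snoc hg measurableSet_Ici))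
      (ENNReal.div_le_of_le_mul' hmarkov)
      fun s hs => hslice _ (hg.comp (measurable_snoc_left s)) (fun x => hg1 _) (hslice0 s) hs.2

end MixedNorm

lemma exists_pos_le_mixedNormOn_cube0 {n : ℕ} {p : Fin n → ℝ≥0∞} (hp : ∀ i, 0 < p i)
    {f : (Fin n → ℝ) → ℝ} (hf : AEStronglyMeasurable f) (hf0 : ¬ f =ᵐ[volume] 0) :
    ∃ t > 0, ∃ c > 0, ∀ r ≥ t, c ≤ mixedNormOn n p (fun x => ‖f x‖₊) (cube0 n r) := by
  set f' := hf.mk f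
  have hf' : Measurable fun x => min (‖f' x‖₊ : ℝ≥0∞) 1 :=
    (measurable_coe_nnreal_ennreal.comp hf.stronglyMeasurable_mk.measurable.nnnorm).min
      measurable_const
  set g : ℕ → (Fin n → ℝ) → ℝ≥0∞ := fun k => (cube0 n (k + 1)).indicator fun x => min ‖f' x‖₊ 1
  have hg : ∀ k, Measurable (g k) := fun k => hf'.indicator (measurableSet_cube0 n _)
  obtain ⟨k, hk⟩ : ∃ k, 0 < ∫⁻ x, g k x := by
    by_contra! hzero
    refine hf0 (hf.ae_eq_mk.trans ?_)
    have hae : ∀ᵐ x, ∀ k, g k x = 0 :=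
      ae_all_iff.mpr fun k => (lintegral_eq_zero_iff (hg k)).mp (le_zero_iff.mp (hzero k))
    filter_upwards [hae] with x hx
    obtain ⟨k, hxk⟩ := exists_nat_mem_cube0 x
    simpa [g, hxk] using hx k
  obtain ⟨b, hb, hbg⟩ := exists_pos_le_mixedNorm (by positivity : (0 : ℝ) < k + 1) n p hp _ hk
  refine ⟨k + 1, by positivity, b, hb, fun r hr => ?_⟩
  refine (hbg (g k) (hg k) (fun x => ?_) (fun x hx => indicator_of_notMem hx _) le_rfl).trans
    (mixedNorm_mono_ae n p ?_)
  · by_cases hx : x ∈ cube0 n (k + 1) <;> simp [g, hx]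
  · filter_upwards [hf.ae_eq_mk] with x hx
    by_cases hxk : x ∈ cube0 n (k + 1)
    · simp [g, hxk, cube0_mono hr hxk, hx, f']
    · simp [g, hxk]

end LMM

open LMM

theorem statement0_general (n : ℕ) (p : Fin n → ℝ≥0∞) (θ : ℝ≥0∞) (w : ℝ → ℝ)
    (hp : ∀ i, 0 < p i) (hθ : 0 < θ)
    (hinf : ∀ t : ℝ, 0 < t →
      lpNormE θ (fun r => ENNReal.ofReal (w r)) (volume.restrict (Ioi t)) = ∞) :
    ∀ f : (Fin n → ℝ) → ℝ, LocallyIntegrable f →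
      LMnorm n p θ w f < ∞ → f =ᵐ[volume] 0 := by
  intro f hf hfin
  by_contra hf0
  obtain ⟨t, ht, c, hc, hcf⟩ := exists_pos_le_mixedNormOn_cube0 hp hf.aestronglyMeasurable hf0
  refine hfin.ne (top_le_iff.mp ?_)
  calc ∞ = c * lpNormE θ (fun r => ENNReal.ofReal (w r)) (volume.restrict (Ioi t)) := by
        rw [hinf t ht, ENNReal.mul_top hc.ne']
    _ ≤ lpNormE θ (fun r => c * ENNReal.ofReal (w r)) (volume.restrict (Ioi t)) :=
        mul_lpNormE_le hθ _ _
    _ ≤ lpNormE θ (fun r => ENNReal.ofReal (w r) * mixedNormOn n p (fun x => ‖f x‖₊) (cube0 n r))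
          (volume.restrict (Ioi t)) := by
        refine lpNormE_mono_ae ((ae_restrict_iff' measurableSet_Ioi).mpr (ae_of_all _ ?_))
        intro r hr
        simpa only [mul_comm c] using mul_le_mul_right (hcf r (le_of_lt hr)) _
    _ ≤ LMnorm n p θ w f :=
        lpNormE_mono_measure (Measure.restrict_mono (Ioi_subset_Ioi ht.le) le_rfl) _

/-- if `‖w‖_{L^θ(t,∞)} = ∞` for all `t > 0`, then `LM_{pθ,w}` is trivial. -/
theorem statement0 (n : ℕ) (p : Fin n → ℝ≥0∞) (θ : ℝ≥0∞) (w : ℝ → ℝ)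
    (hp : ∀ i, 0 < p i) (hθ : 0 < θ)
    (hwm : Measurable w) (hw0 : ∀ r, 0 ≤ w r)
    (hinf : ∀ t : ℝ, 0 < t →
      lpNormE θ (fun r => ENNReal.ofReal (w r)) (volume.restrict (Ioi t)) = ∞) :
    ∀ f : (Fin n → ℝ) → ℝ, LocallyIntegrable f →
      LMnorm n p θ w f < ∞ → f =ᵐ[volume] 0 :=
  statement0_general n p θ w hp hθ hinf
end
end

section
/- Let 1 < p⃗ < ∞, 1 ≤ θ ≤ ∞, and 0 < λ < 1/p_1+⋯+1/p_n. Then for every measurable f : ℝ^n → ℂ, the local mixed Morrey norm and the homogeneous mixed Herz norm with exponent −λ are equivalent: ‖f‖_{LM^λ_{p⃗,θ}} ∼ (Σ_{j∈ℤ} (2^{-λj}‖f·χ_{A_j}‖_{L^{p⃗}})^θ)^{1/θ} = ‖f‖_{K̇^{-λ,θ}_{p⃗}}, with equivalence constants independent of f. -/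
open MeasureTheory ENNReal NNReal Set Filter

noncomputable section

open LMM

/-- The dyadic annulus `A_j = B_j ∖ B_{j-1}`. -/
def annulus (n : ℕ) (j : ℤ) : Set (Fin n → ℝ) :=
  closedBall0 n ((2 : ℝ) ^ j) \ closedBall0 n ((2 : ℝ) ^ (j - 1))

/-- The homogeneous mixed Herz norm `‖f‖_{K̇^{α,θ}_{p}}`. -/
def herzNormC (n : ℕ) (p : Fin n → ℝ≥0∞) (θ : ℝ≥0∞) (alpha : ℝ)
    (f : (Fin n → ℝ) → ℂ) : ℝ≥0∞ :=
  if θ = ∞ then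
    ⨆ j : ℤ, ENNReal.ofReal ((2 : ℝ) ^ (alpha * (j : ℝ))) *
      mixedNormOn n p (fun x => (‖f x‖₊ : ℝ≥0∞)) (annulus n j)
  else
    (∑' j : ℤ, (ENNReal.ofReal ((2 : ℝ) ^ (alpha * (j : ℝ))) *
      mixedNormOn n p (fun x => (‖f x‖₊ : ℝ≥0∞)) (annulus n j)) ^ θ.toReal) ^ (1 / θ.toReal)

/-!
Write `N r = ‖f χ_{B(0,r)}‖_{L^p⃗}`, `a_j = ‖f χ_{A_j}‖_{L^p⃗}` and `b_j = 2^{-λj} a_j`.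
For `r ∈ [2^j, 2^{j+1})` we have `A_j ⊆ B(0,r) ⊆ B_{j+1}`, and up to the origin the ball
`B_{j+1}` is the disjoint union of the annuli `A_{j+1-k}`, `k ≥ 0`. Since the mixed norm is
monotone and countably subadditive (Minkowski's inequality in each variable), this gives
`2^{-λ} b_j ≤ r^{-λ} N r ≤ 2^λ Σ_k 2^{-λk} b_{j+1-k}`.
The map `r ↦ ⌊log₂ r⌋` pushes `dr/r` forward to `log 2` times counting measure on `ℤ`, so the
first bound compares the `ℓ^θ` norm of `b` with the `L^θ(dr/r)` norm of `r^{-λ} N r`; for the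
second, `λ > 0` makes the weights `2^{-λk}` summable and Young's inequality `ℓ¹ * ℓ^θ ⊆ ℓ^θ`
applies.
-/

theorem ENNReal.iSup_rpow {ι : Sort*} (f : ι → ℝ≥0∞) {s : ℝ} (hs : 0 < s) :
    (⨆ i, f i) ^ s = ⨆ i, f i ^ s := by
  simpa only [ENNReal.orderIsoRpow_apply] using (ENNReal.orderIsoRpow s hs).map_iSup f

theorem ENNReal.exists_nnreal_pos_ge {x y : ℝ≥0∞} (hx : x ≠ ∞) (hy : y ≠ ∞) :
    ∃ C : ℝ≥0, 0 < C ∧ x ≤ C ∧ y ≤ C := by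
  refine ⟨x.toNNReal + y.toNNReal + 1, by positivity, ?_, ?_⟩
  · exact (ENNReal.coe_toNNReal hx).ge.trans (ENNReal.coe_le_coe.2 (le_add_right le_self_add))
  · exact (ENNReal.coe_toNNReal hy).ge.trans (ENNReal.coe_le_coe.2 (le_add_right le_add_self))

namespace MeasureTheory

variable {α : Type*} [MeasurableSpace α] {μ : Measure α} {p : ℝ≥0∞}

theorem eLpNorm_tsum_le_tsum {f : ℕ → α → ℝ≥0∞} (hf : ∀ k, AEMeasurable (f k) μ) (hp : 1 ≤ p) :
    eLpNorm (fun x => ∑' k, f k x) p μ ≤ ∑' k, eLpNorm (f k) p μ := by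
  have hp0 : p ≠ 0 := (zero_lt_one.trans_le hp).ne'
  rcases eq_or_ne p ∞ with rfl | hp_top
  · simp only [eLpNorm_exponent_top, eLpNormEssSup_eq_essSup_enorm, enorm_eq_self]
    refine essSup_le_of_ae_le _ ?_
    filter_upwards [ae_all_iff.2 fun k => ae_le_essSup (f k)] with x hx
    exact ENNReal.tsum_le_tsum hx
  have hs : 0 < p.toReal := ENNReal.toReal_pos hp0 hp_top
  let S : ℕ → α → ℝ≥0∞ := fun N x => ∑ k ∈ Finset.range N, f k x
  have hS_sum : ∀ N, eLpNorm (S N) p μ ≤ ∑ k ∈ Finset.range N, eLpNorm (f k) p μ := fun N => by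
    simpa only [S, Finset.sum_fn] using
      eLpNorm_sum_le (fun k _ => (hf k).aestronglyMeasurable) hp
  have hS_mono : ∀ᵐ x ∂μ, Monotone fun N => S N x ^ p.toReal :=
    Eventually.of_forall fun x N M hNM => ENNReal.rpow_le_rpow
      (Finset.sum_le_sum_of_subset (Finset.range_subset_range.2 hNM)) hs.le
  have hlim : eLpNorm (fun x => ∑' k, f k x) p μ = ⨆ N, eLpNorm (S N) p μ := by
    simp only [eLpNorm_eq_lintegral_rpow_enorm_toReal hp0 hp_top, enorm_eq_self,
      ENNReal.tsum_eq_iSup_nat, ENNReal.iSup_rpow _ hs]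
    rw [lintegral_iSup' (fun N => (Finset.aemeasurable_fun_sum _ fun k _ => hf k).pow_const _)
      hS_mono, ENNReal.iSup_rpow _ (one_div_pos.2 hs)]
  rw [hlim]
  exact iSup_le fun N => (hS_sum N).trans (ENNReal.sum_le_tsum _)

theorem eLpNorm_le_ofReal_mul_of_ae_le {f g : α → ℝ≥0∞} {c : ℝ}
    (h : ∀ᵐ x ∂μ, f x ≤ ENNReal.ofReal c * g x) :
    eLpNorm f p μ ≤ ENNReal.ofReal c * eLpNorm g p μ :=
  eLpNorm_le_nnreal_smul_eLpNorm_of_ae_le_mul' (c := c.toNNReal) h p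

end MeasureTheory

theorem eLpNorm_count_comp_sub (b : ℤ → ℝ≥0∞) (s : ℤ) (q : ℝ≥0∞) :
    eLpNorm (fun j => b (j - s)) q Measure.count = eLpNorm b q Measure.count :=
  eLpNorm_comp_measurePreserving (measurable_of_countable b).aestronglyMeasurable
    (measurePreserving_sub_right Measure.count s)

theorem eLpNorm_count_tsum_mul_shift_le {q : ℝ≥0∞} (hq : 1 ≤ q) (w : ℕ → ℝ) (t : ℕ → ℤ)
    (b : ℤ → ℝ≥0∞) :
    eLpNorm (fun j => ∑' k, ENNReal.ofReal (w k) * b (j - t k)) q Measure.count ≤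
      (∑' k, ENNReal.ofReal (w k)) * eLpNorm b q Measure.count := by
  calc _ ≤ ∑' k, eLpNorm (fun j => ENNReal.ofReal (w k) * b (j - t k)) q Measure.count :=
        eLpNorm_tsum_le_tsum (fun k => (measurable_of_countable _).aemeasurable) hq
    _ ≤ ∑' k, ENNReal.ofReal (w k) * eLpNorm b q Measure.count := by
        refine ENNReal.tsum_le_tsum fun k => ?_
        rw [← eLpNorm_count_comp_sub b (t k)]
        exact eLpNorm_le_ofReal_mul_of_ae_le (Eventually.of_forall fun _ => le_rfl)
    _ = _ := ENNReal.tsum_mul_right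

theorem tsum_ofReal_two_rpow_neg_pow (lam : ℝ) :
    ∑' k : ℕ, ENNReal.ofReal (((2 : ℝ) ^ (-lam)) ^ k) = (1 - ENNReal.ofReal (2 ^ (-lam)))⁻¹ := by
  simp_rw [ENNReal.ofReal_pow (Real.rpow_nonneg zero_le_two _)]
  exact ENNReal.tsum_geometric _

section DyadicDecomposition

open Real

variable {lam r : ℝ} {j : ℤ}

theorem floor_logb_two_eq_iff (hr : 0 < r) (j : ℤ) :
    ⌊logb 2 r⌋ = j ↔ r ∈ Ico ((2 : ℝ) ^ j) (2 ^ (j + 1)) := by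
  rw [Int.floor_eq_iff, mem_Ico, le_logb_iff_rpow_le one_lt_two hr,
    logb_lt_iff_lt_rpow one_lt_two hr, ← Int.cast_one, ← Int.cast_add, Real.rpow_intCast,
    Real.rpow_intCast]

theorem measurable_floor_logb_two : Measurable fun r : ℝ => ⌊logb 2 r⌋ :=
  Int.measurable_floor.comp (Real.measurable_log.div_const _)

theorem lintegral_Ico_two_zpow_inv (j : ℤ) :
    ∫⁻ r in Ico ((2 : ℝ) ^ j) (2 ^ (j + 1)), ENNReal.ofReal r⁻¹ = ENNReal.ofReal (log 2) := by
  have h2j : (0 : ℝ) < 2 ^ j := zpow_pos two_pos j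
  have hle : (2 : ℝ) ^ j ≤ 2 ^ (j + 1) := zpow_le_zpow_right₀ one_le_two (by omega)
  rw [← ofReal_integral_eq_lintegral_ofReal, integral_Ico_eq_integral_Ioo,
    ← integral_Ioc_eq_integral_Ioo, ← intervalIntegral.integral_of_le hle,
    integral_inv_of_pos h2j (h2j.trans_le hle),
    zpow_add_one₀ two_ne_zero, mul_div_cancel_left₀ _ h2j.ne']
  · exact ((continuousOn_inv₀.mono fun r hr => (h2j.trans_le hr.1).ne').integrableOn_Icc).mono_set
      Ico_subset_Icc_self
  · filter_upwards [ae_restrict_mem measurableSet_Ico] with r hr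
    exact inv_nonneg.2 (h2j.trans_le hr.1).le

def haarIoi : Measure ℝ := (volume.restrict (Ioi 0)).withDensity fun r => ENNReal.ofReal r⁻¹

theorem map_floor_logb_two_haarIoi :
    haarIoi.map (fun r => ⌊logb 2 r⌋) = ENNReal.ofReal (log 2) • Measure.count := by
  refine Measure.ext_of_singleton fun j => ?_
  have hpre : (fun r => ⌊logb 2 r⌋) ⁻¹' {j} ∩ Ioi 0 = Ico ((2 : ℝ) ^ j) (2 ^ (j + 1)) := by
    ext r
    simp only [mem_inter_iff, mem_preimage, mem_singleton_iff, mem_Ioi]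
    refine ⟨fun h => (floor_logb_two_eq_iff h.2 j).1 h.1, fun h => ?_⟩
    have hr : 0 < r := (zpow_pos two_pos j).trans_le h.1
    exact ⟨(floor_logb_two_eq_iff hr j).2 h, hr⟩
  have hmeas : MeasurableSet ((fun r => ⌊logb 2 r⌋) ⁻¹' {j}) :=
    measurable_floor_logb_two (measurableSet_singleton j)
  rw [Measure.map_apply measurable_floor_logb_two (measurableSet_singleton j), Measure.smul_apply,
    Measure.count_singleton, smul_eq_mul, mul_one, haarIoi, withDensity_apply _ hmeas,
    Measure.restrict_restrict hmeas, hpre, lintegral_Ico_two_zpow_inv]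

theorem eLpNorm_comp_floor_logb_two (x : ℤ → ℝ≥0∞) (p : ℝ≥0∞) :
    eLpNorm (fun r => x ⌊logb 2 r⌋) p haarIoi =
      ENNReal.ofReal (log 2) ^ (1 / p).toReal * eLpNorm x p Measure.count := by
  have hlog : ENNReal.ofReal (log 2) ≠ 0 := by
    simpa using Real.log_pos one_lt_two
  rw [← smul_eq_mul, ← eLpNorm_smul_measure_of_ne_zero hlog, ← map_floor_logb_two_haarIoi,
    eLpNorm_map_measure (measurable_of_countable x).aestronglyMeasurable
      measurable_floor_logb_two.aemeasurable]
  rfl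

theorem ae_haarIoi_pos : ∀ᵐ r ∂haarIoi, 0 < r :=
  (withDensity_absolutelyContinuous _ _).ae_le (ae_restrict_mem measurableSet_Ioi)

theorem mem_Ico_floor_logb_two (hr : 0 < r) :
    r ∈ Ico ((2 : ℝ) ^ ⌊logb 2 r⌋) (2 ^ (⌊logb 2 r⌋ + 1)) :=
  (floor_logb_two_eq_iff hr _).1 rfl

theorem zpow_two_rpow_neg (lam : ℝ) (j : ℤ) : ((2 : ℝ) ^ j) ^ (-lam) = 2 ^ (-lam * j) := by
  rw [← Real.rpow_intCast, ← rpow_mul zero_le_two, mul_comm]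

theorem two_rpow_neg_mul_succ (lam : ℝ) (j : ℤ) :
    (2 : ℝ) ^ (-lam * j) = 2 ^ lam * 2 ^ (-lam * (j + 1 : ℤ)) := by
  rw [← rpow_add two_pos]
  push_cast
  ring_nf

theorem rpow_neg_le_two_rpow (hlam : 0 ≤ lam) (hr : (2 : ℝ) ^ j ≤ r) :
    r ^ (-lam) ≤ 2 ^ (-lam * j) := by
  rw [← zpow_two_rpow_neg]
  exact Real.rpow_le_rpow_of_nonpos (zpow_pos two_pos j) hr (neg_nonpos.2 hlam)

theorem two_rpow_le_mul_rpow_neg (hlam : 0 ≤ lam) (hr0 : 0 < r) (hr : r ≤ (2 : ℝ) ^ (j + 1)) :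
    (2 : ℝ) ^ (-lam * j) ≤ 2 ^ lam * r ^ (-lam) := by
  rw [two_rpow_neg_mul_succ, ← zpow_two_rpow_neg]
  exact mul_le_mul_of_nonneg_left (Real.rpow_le_rpow_of_nonpos hr0 hr (neg_nonpos.2 hlam))
    (rpow_nonneg zero_le_two _)

variable {N : ℝ → ℝ≥0∞} {a : ℤ → ℝ≥0∞} {q : ℝ≥0∞}

theorem eLpNorm_count_le_eLpNorm_haarIoi (hlam : 0 ≤ lam) (hN : Monotone N)
    (ha : ∀ j, a j ≤ N (2 ^ j)) :
    ENNReal.ofReal (log 2) ^ (1 / q).toReal *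
        eLpNorm (fun j : ℤ => ENNReal.ofReal (2 ^ (-lam * j)) * a j) q Measure.count ≤
      ENNReal.ofReal (2 ^ lam) *
        eLpNorm (fun r => ENNReal.ofReal (r ^ (-lam)) * N r) q haarIoi := by
  rw [← eLpNorm_comp_floor_logb_two]
  refine eLpNorm_le_ofReal_mul_of_ae_le ?_
  filter_upwards [ae_haarIoi_pos] with r hr
  obtain ⟨hjr, hrj⟩ := mem_Ico_floor_logb_two hr
  calc ENNReal.ofReal (2 ^ (-lam * ⌊logb 2 r⌋)) * a ⌊logb 2 r⌋
      ≤ ENNReal.ofReal (2 ^ lam * r ^ (-lam)) * N r :=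
        mul_le_mul' (ENNReal.ofReal_le_ofReal (two_rpow_le_mul_rpow_neg hlam hr hrj.le))
          ((ha _).trans (hN hjr))
    _ = _ := by rw [ENNReal.ofReal_mul (rpow_nonneg zero_le_two _), mul_assoc]

theorem ofReal_two_rpow_mul_le_tsum (hNa : ∀ j, N (2 ^ j) ≤ ∑' k : ℕ, a (j - k)) (j : ℤ) :
    ENNReal.ofReal (2 ^ (-lam * j)) * N (2 ^ (j + 1)) ≤ ENNReal.ofReal (2 ^ lam) *
      ∑' k : ℕ, ENNReal.ofReal (((2 : ℝ) ^ (-lam)) ^ k) *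
        (ENNReal.ofReal (2 ^ (-lam * (j - ((k : ℤ) - 1) : ℤ))) * a (j - ((k : ℤ) - 1))) := by
  have hpow : ∀ k : ℕ, (2 : ℝ) ^ (-lam * (j + 1 : ℤ)) =
      ((2 : ℝ) ^ (-lam)) ^ k * 2 ^ (-lam * (j - ((k : ℤ) - 1) : ℤ)) := fun k => by
    rw [← Real.rpow_natCast, ← rpow_mul zero_le_two, ← rpow_add two_pos]
    push_cast
    ring_nf
  calc _ = ENNReal.ofReal (2 ^ lam) *
        (ENNReal.ofReal (2 ^ (-lam * (j + 1 : ℤ))) * N (2 ^ (j + 1))) := by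
        rw [← mul_assoc, ← ENNReal.ofReal_mul (rpow_nonneg zero_le_two _),
          ← two_rpow_neg_mul_succ]
    _ ≤ ENNReal.ofReal (2 ^ lam) *
        ∑' k : ℕ, ENNReal.ofReal (2 ^ (-lam * (j + 1 : ℤ))) * a (j + 1 - k) := by
        rw [ENNReal.tsum_mul_left]
        exact mul_le_mul_right (mul_le_mul_right (hNa _) _) _
    _ = _ := by
        congr 1
        refine tsum_congr fun k => ?_
        rw [hpow k, ENNReal.ofReal_mul (pow_nonneg (rpow_nonneg zero_le_two _) _), mul_assoc,
          show j + 1 - (k : ℤ) = j - ((k : ℤ) - 1) by ring]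

theorem eLpNorm_haarIoi_le_eLpNorm_count (hlam : 0 ≤ lam) (hq : 1 ≤ q) (hN : Monotone N)
    (hNa : ∀ j, N (2 ^ j) ≤ ∑' k : ℕ, a (j - k)) :
    eLpNorm (fun r => ENNReal.ofReal (r ^ (-lam)) * N r) q haarIoi ≤
      ENNReal.ofReal (log 2) ^ (1 / q).toReal * (ENNReal.ofReal (2 ^ lam) *
        (1 - ENNReal.ofReal (2 ^ (-lam)))⁻¹ *
        eLpNorm (fun j : ℤ => ENNReal.ofReal (2 ^ (-lam * j)) * a j) q Measure.count) := by
  set c : ℤ → ℝ≥0∞ := fun j => ENNReal.ofReal (2 ^ (-lam * j)) * N (2 ^ (j + 1))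
  calc _ ≤ eLpNorm (fun r => c ⌊logb 2 r⌋) q haarIoi := by
        refine eLpNorm_mono_enorm_ae ?_
        filter_upwards [ae_haarIoi_pos] with r hr
        obtain ⟨hjr, hrj⟩ := mem_Ico_floor_logb_two hr
        exact mul_le_mul' (ENNReal.ofReal_le_ofReal (rpow_neg_le_two_rpow hlam hjr))
          (hN hrj.le)
    _ = ENNReal.ofReal (log 2) ^ (1 / q).toReal * eLpNorm c q Measure.count :=
        eLpNorm_comp_floor_logb_two c q
    _ ≤ _ := by
        rw [mul_assoc (ENNReal.ofReal _), ← tsum_ofReal_two_rpow_neg_pow lam]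
        gcongr
        exact (eLpNorm_le_ofReal_mul_of_ae_le
          (Eventually.of_forall (ofReal_two_rpow_mul_le_tsum hNa))).trans
          (mul_le_mul_right (eLpNorm_count_tsum_mul_shift_le hq (fun k => (2 ^ (-lam)) ^ k)
            (fun k => (k : ℤ) - 1) fun j => ENNReal.ofReal (2 ^ (-lam * j)) * a j) _)

theorem exists_eLpNorm_count_equiv_eLpNorm_haarIoi (hlam : 0 < lam) (hq : 1 ≤ q) :
    ∃ C : ℝ≥0, 0 < C ∧ ∀ (N : ℝ → ℝ≥0∞) (a : ℤ → ℝ≥0∞), Monotone N →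
      (∀ j, a j ≤ N (2 ^ j)) → (∀ j, N (2 ^ j) ≤ ∑' k : ℕ, a (j - k)) →
      (C : ℝ≥0∞)⁻¹ * eLpNorm (fun j : ℤ => ENNReal.ofReal (2 ^ (-lam * j)) * a j) q
          Measure.count ≤ eLpNorm (fun r => ENNReal.ofReal (r ^ (-lam)) * N r) q haarIoi ∧
        eLpNorm (fun r => ENNReal.ofReal (r ^ (-lam)) * N r) q haarIoi ≤
          C * eLpNorm (fun j : ℤ => ENNReal.ofReal (2 ^ (-lam * j)) * a j) q Measure.count := by
  set L := ENNReal.ofReal (log 2) ^ (1 / q).toReal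
  have hL0 : L ≠ 0 := by
    have : ENNReal.ofReal (log 2) ≠ 0 := by simpa using Real.log_pos one_lt_two
    simp [L, ENNReal.rpow_eq_zero_iff, this]
  have hL : L ≠ ∞ := ENNReal.rpow_ne_top_of_nonneg ENNReal.toReal_nonneg ENNReal.ofReal_ne_top
  have hK : (1 - ENNReal.ofReal (2 ^ (-lam)))⁻¹ ≠ ∞ := by
    refine ENNReal.inv_ne_top.2 (tsub_pos_of_lt ?_).ne'
    rw [ENNReal.ofReal_lt_one]
    exact Real.rpow_lt_one_of_one_lt_of_neg one_lt_two (neg_neg_of_pos hlam)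
  obtain ⟨C, hC, hC₁, hC₂⟩ := ENNReal.exists_nnreal_pos_ge
    (ENNReal.mul_ne_top (ENNReal.inv_ne_top.2 hL0) ENNReal.ofReal_ne_top)
    (ENNReal.mul_ne_top hL (ENNReal.mul_ne_top ENNReal.ofReal_ne_top hK))
  refine ⟨C, hC, fun N a hN ha hNa => ⟨?_, ?_⟩⟩
  · rw [ENNReal.inv_mul_le_iff (by exact_mod_cast hC.ne') ENNReal.coe_ne_top]
    refine le_trans ?_ (mul_le_mul_left hC₁ _)
    rw [← ENNReal.inv_mul_cancel_left hL0 hL (b := eLpNorm _ q _), mul_assoc]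
    exact mul_le_mul_right (eLpNorm_count_le_eLpNorm_haarIoi hlam.le hN ha) _
  · refine (eLpNorm_haarIoi_le_eLpNorm_count hlam.le hq hN hNa).trans ?_
    rw [← mul_assoc]
    exact mul_le_mul_left hC₂ _

end DyadicDecomposition

theorem measurable_snoc {n : ℕ} :
    Measurable fun q : (Fin n → ℝ) × ℝ => (Fin.snoc q.1 q.2 : Fin (n + 1) → ℝ) := by
  refine measurable_pi_lambda _ fun i => ?_
  induction i using Fin.lastCases with
  | last => simpa [Fin.snoc_last] using measurable_snd
  | cast j => simpa [Fin.snoc_castSucc, Function.comp_def] using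
      (measurable_pi_apply j).comp measurable_fst

namespace LMM

theorem morreyScale_eq_eLpNorm {q : ℝ≥0∞} (hq : q ≠ 0) (lam : ℝ) (A : ℝ → ℝ≥0∞) :
    morreyScale q lam A = eLpNorm (fun r => ENNReal.ofReal (r ^ (-lam)) * A r) q haarIoi := by
  have hdens : Measurable fun r : ℝ => ENNReal.ofReal r⁻¹ := by fun_prop
  rw [morreyScale]
  split_ifs with hq_top
  · have hac : volume.restrict (Ioi (0 : ℝ)) ≪ haarIoi :=
      withDensity_absolutelyContinuous' hdens.aemeasurable
        (by filter_upwards [ae_restrict_mem measurableSet_Ioi] with r hr; simpa using hr)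
    rw [hq_top, eLpNorm_exponent_top, eLpNormEssSup_eq_essSup_enorm]
    exact le_antisymm (essSup_mono_measure hac)
      (essSup_mono_measure (withDensity_absolutelyContinuous _ _))
  · rw [eLpNorm_eq_lintegral_rpow_enorm_toReal hq hq_top, haarIoi,
      lintegral_withDensity_eq_lintegral_mul_non_measurable _ hdens
        (Eventually.of_forall fun _ => ENNReal.ofReal_lt_top)]
    simp only [enorm_eq_self, Pi.mul_apply, mul_comm]

theorem lpNormE_eq_eLpNorm {p : ℝ≥0∞} (hp : p ≠ 0) (g : ℝ → ℝ≥0∞) (μ : Measure ℝ) :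
    lpNormE p g μ = eLpNorm g p μ := by
  rw [lpNormE]
  split_ifs with hp_top
  · rw [hp_top, eLpNorm_exponent_top, eLpNormEssSup_eq_essSup_enorm]
    rfl
  · rw [eLpNorm_eq_lintegral_rpow_enorm_toReal hp hp_top]
    rfl

theorem mixedNorm_succ {n : ℕ} {p : Fin (n + 1) → ℝ≥0∞} (hp : p (Fin.last n) ≠ 0)
    (g : (Fin (n + 1) → ℝ) → ℝ≥0∞) :
    mixedNorm (n + 1) p g = eLpNorm (fun t => mixedNorm n (fun i => p i.castSucc)
      fun x => g (Fin.snoc x t)) (p (Fin.last n)) volume :=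
  lpNormE_eq_eLpNorm hp _ _

theorem measurable_mixedNorm {β : Type*} [MeasurableSpace β] :
    ∀ {n : ℕ} {p : Fin n → ℝ≥0∞}, (∀ i, p i ≠ ∞) → ∀ {h : (Fin n → ℝ) → β → ℝ≥0∞},
      Measurable (Function.uncurry h) → Measurable fun b => mixedNorm n p fun x => h x b
  | 0, _, _, _, hh => hh.comp (measurable_const.prodMk measurable_id)
  | n + 1, p, hp, h, hh => by
    simp only [mixedNorm, lpNormE, if_neg (hp (Fin.last n))]
    have hinner : Measurable fun q : ℝ × β => mixedNorm n (fun i => p i.castSucc)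
        fun x => h (Fin.snoc x q.1) q.2 :=
      measurable_mixedNorm (fun i => hp _) (hh.comp ((measurable_snoc.comp
        (measurable_fst.prodMk (measurable_fst.comp measurable_snd))).prodMk
          (measurable_snd.comp measurable_snd)))
    exact ((hinner.comp measurable_swap).pow_const _).lintegral_prod_right.pow_const _

theorem ae_ae_snoc {n : ℕ} {P : (Fin (n + 1) → ℝ) → Prop} (h : ∀ᵐ y, P y) :
    ∀ᵐ t : ℝ, ∀ᵐ x : Fin n → ℝ, P (Fin.snoc x t) := by
  have := (volume_preserving_piFinSuccAbove (fun _ : Fin (n + 1) => ℝ)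
    (Fin.last n)).symm.quasiMeasurePreserving.ae h
  simp only [MeasurableEquiv.piFinSuccAbove, Fin.insertNthEquiv_last, MeasurableEquiv.symm_mk,
    Equiv.symm_symm, MeasurableEquiv.coe_mk] at this
  exact Measure.ae_ae_of_ae_prod this

theorem mixedNorm_mono_ae_s19 :
    ∀ {n : ℕ} {p : Fin n → ℝ≥0∞}, (∀ i, p i ≠ 0) → ∀ {g g' : (Fin n → ℝ) → ℝ≥0∞},
      (∀ᵐ x, g x ≤ g' x) → mixedNorm n p g ≤ mixedNorm n p g'
  | 0, _, _, g, g', h => by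
    obtain ⟨x, hx⟩ := h.exists
    rwa [Subsingleton.elim x finZeroElim] at hx
  | n + 1, p, hp, g, g', h => by
    rw [mixedNorm_succ (hp _), mixedNorm_succ (hp _)]
    refine eLpNorm_mono_enorm_ae ?_
    filter_upwards [ae_ae_snoc h] with t ht
    exact mixedNorm_mono_ae_s19 (fun i => hp _) ht

theorem mixedNormOn_mono_set {n : ℕ} {p : Fin n → ℝ≥0∞} (hp : ∀ i, p i ≠ 0)
    (g : (Fin n → ℝ) → ℝ≥0∞) {S S' : Set (Fin n → ℝ)} (h : S ⊆ S') :
    mixedNormOn n p g S ≤ mixedNormOn n p g S' :=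
  mixedNorm_mono_ae_s19 hp (Eventually.of_forall (indicator_le_indicator_of_subset h fun _ => zero_le))

theorem mixedNorm_tsum_le :
    ∀ {n : ℕ} {p : Fin n → ℝ≥0∞}, (∀ i, 1 ≤ p i ∧ p i ≠ ∞) →
      ∀ {g : ℕ → (Fin n → ℝ) → ℝ≥0∞}, (∀ k, Measurable (g k)) →
        mixedNorm n p (fun x => ∑' k, g k x) ≤ ∑' k, mixedNorm n p (g k)
  | 0, _, _, _, _ => le_rfl
  | n + 1, p, hp, g, hg => by
    have hp0 : ∀ i, p i ≠ 0 := fun i => (zero_lt_one.trans_le (hp i).1).ne'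
    have hslice : ∀ k, Measurable (Function.uncurry fun (x : Fin n → ℝ) (t : ℝ) =>
        g k (Fin.snoc x t)) := fun k => (hg k).comp measurable_snoc
    simp only [mixedNorm_succ (hp0 _)]
    calc _ ≤ eLpNorm (fun t => ∑' k, mixedNorm n (fun i => p i.castSucc)
            fun x => g k (Fin.snoc x t)) (p (Fin.last n)) volume :=
          eLpNorm_mono_enorm fun t => mixedNorm_tsum_le (fun i => hp _)
            fun k => (hslice k).of_uncurry_right
      _ ≤ _ := eLpNorm_tsum_le_tsum
          (fun k => (measurable_mixedNorm (fun i => (hp _).2) (hslice k)).aemeasurable)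
          (hp _).1

theorem measurable_euclNorm {n : ℕ} : Measurable (euclNorm (n := n)) := by
  unfold euclNorm
  fun_prop

theorem euclNorm_pos {n : ℕ} {x : Fin n → ℝ} (hx : x ≠ 0) : 0 < euclNorm x := by
  obtain ⟨i, hi⟩ := Function.ne_iff.1 hx
  exact Real.sqrt_pos.2 (Finset.sum_pos' (fun i _ => sq_nonneg _)
    ⟨i, Finset.mem_univ i, sq_pos_of_ne_zero hi⟩)

theorem closedBall0_mono {n : ℕ} {r r' : ℝ} (h : r ≤ r') : closedBall0 n r ⊆ closedBall0 n r' :=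
  fun _ hx => le_trans hx h

theorem exists_mem_annulus {n : ℕ} {x : Fin n → ℝ} (hx : x ≠ 0) {j : ℤ}
    (hxj : x ∈ closedBall0 n ((2 : ℝ) ^ j)) : ∃ k : ℕ, x ∈ annulus n (j - k) := by
  obtain ⟨i, hi, hi'⟩ := exists_mem_Ioc_zpow (euclNorm_pos hx) (one_lt_two (α := ℝ))
  have hij : i + 1 ≤ j := by
    have := (zpow_lt_zpow_iff_right₀ (one_lt_two (α := ℝ))).1 (hi.trans_le hxj)
    omega
  refine ⟨(j - (i + 1)).toNat, ?_⟩
  rw [Int.toNat_of_nonneg (by omega), _root_.sub_sub_cancel]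
  exact ⟨hi', fun h => (not_le.2 hi) (by simpa [closedBall0] using h)⟩

theorem mixedNormOn_closedBall0_le_tsum {n : ℕ} {p : Fin (n + 1) → ℝ≥0∞}
    (hp : ∀ i, 1 ≤ p i ∧ p i ≠ ∞) {g : (Fin (n + 1) → ℝ) → ℝ≥0∞} (hg : Measurable g) (j : ℤ) :
    mixedNormOn (n + 1) p g (closedBall0 (n + 1) ((2 : ℝ) ^ j)) ≤
      ∑' k : ℕ, mixedNormOn (n + 1) p g (annulus (n + 1) (j - k)) := by
  have hp0 : ∀ i, p i ≠ 0 := fun i => (zero_lt_one.trans_le (hp i).1).ne'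
  have hA : ∀ k : ℕ, MeasurableSet (annulus (n + 1) (j - k)) := fun k =>
    (measurable_euclNorm measurableSet_Iic).diff (measurable_euclNorm measurableSet_Iic)
  refine (mixedNorm_mono_ae_s19 hp0 ?_).trans (mixedNorm_tsum_le hp fun k => hg.indicator (hA k))
  -- the origin lies in no annulus, but it is a null set because the dimension is positive
  filter_upwards [compl_mem_ae_iff.2 (measure_singleton (0 : Fin (n + 1) → ℝ))] with x hx
  by_cases hxB : x ∈ closedBall0 (n + 1) ((2 : ℝ) ^ j)
  · obtain ⟨k, hk⟩ := exists_mem_annulus hx hxB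
    rw [indicator_of_mem hxB, ← indicator_of_mem hk g]
    exact ENNReal.le_tsum k
  · simp [indicator_of_notMem hxB]

end LMM

theorem herzNormC_eq_eLpNorm {θ : ℝ≥0∞} (hθ : θ ≠ 0) (n : ℕ) (p : Fin n → ℝ≥0∞) (alpha : ℝ)
    (f : (Fin n → ℝ) → ℂ) :
    herzNormC n p θ alpha f = eLpNorm (fun j : ℤ => ENNReal.ofReal ((2 : ℝ) ^ (alpha * j)) *
      mixedNormOn n p (fun x => (‖f x‖₊ : ℝ≥0∞)) (annulus n j)) θ Measure.count := by
  rw [herzNormC]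
  split_ifs with hθ_top
  · rw [hθ_top, eLpNorm_exponent_top, eLpNormEssSup_eq_essSup_enorm, essSup_count]
    rfl
  · rw [eLpNorm_eq_lintegral_rpow_enorm_toReal hθ hθ_top, lintegral_count]
    rfl

/-- equivalence of the local mixed Morrey norm `‖·‖_{LM^λ_{p,θ}}`
and the homogeneous mixed Herz norm `‖·‖_{K̇^{-λ,θ}_{p}}`. -/
theorem statement19 (n : ℕ) (p : Fin n → ℝ≥0∞) (θ : ℝ≥0∞) (lam : ℝ)
    (hp : ∀ i, 1 < p i ∧ p i < ∞) (hθ : 1 ≤ θ)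
    (hlam0 : 0 < lam) (hlam : lam < sumInv p) :
    ∃ C : ℝ≥0, 0 < C ∧ ∀ f : (Fin n → ℝ) → ℂ, Measurable f →
      (C : ℝ≥0∞)⁻¹ * herzNormC n p θ (-lam) f ≤
          LMlamB n p θ lam (fun x => (‖f x‖₊ : ℝ≥0∞)) ∧
        LMlamB n p θ lam (fun x => (‖f x‖₊ : ℝ≥0∞)) ≤ C * herzNormC n p θ (-lam) f := by
  cases n with
  | zero =>
    simp only [sumInv, Finset.univ_eq_empty, Finset.sum_empty] at hlam
    exact absurd hlam0 hlam.not_gt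
  | succ m =>
    have hp' : ∀ i, 1 ≤ p i ∧ p i ≠ ∞ := fun i => ⟨(hp i).1.le, (hp i).2.ne⟩
    have hp0 : ∀ i, p i ≠ 0 := fun i => (zero_lt_one.trans (hp i).1).ne'
    have hθ0 : θ ≠ 0 := (zero_lt_one.trans_le hθ).ne'
    obtain ⟨C, hC, hequiv⟩ := exists_eLpNorm_count_equiv_eLpNorm_haarIoi hlam0 hθ
    refine ⟨C, hC, fun f hf => ?_⟩
    rw [herzNormC_eq_eLpNorm hθ0, LMlamB, morreyScale_eq_eLpNorm hθ0]
    exact hequiv _ _ (fun r r' h => mixedNormOn_mono_set hp0 _ (closedBall0_mono h))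
      (fun j => mixedNormOn_mono_set hp0 _ sdiff_subset)
      (mixedNormOn_closedBall0_le_tsum hp' hf.nnnorm.coe_nnreal_ennreal)
end
end
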